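/- arXiv:2208.12926 — 2 statements merged into one kernel-verified Lean document; each statement's English description precedes it below -/
import Mathlib

section
/- Let ℓ, n ∈ ℕ and k, ε ≥ 0. Let X and Y be independent probability distributions on 𝔽_{2^ℓ}ⁿ such that H_∞(X) ≥ k and Y is ε-small-biased. Then the statistical distance between X + Y (coordinatewise addition in 𝔽_{2^ℓ}) and the uniform distribution on 𝔽_{2^ℓ}ⁿ is at most 2^{(nℓ − k)/2 − 1}·ε. -/
open Finset

/-- Statistical distance between two (mass functions of) distributions on a finite set. -/
noncomputable def SD {Ω : Type*} [Fintype Ω] (p q : Ω → ℝ) : ℝ :=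
  (∑ ω, |p ω - q ω|) / 2

/-- Min-entropy of a distribution on a finite set: `-log₂ (max_ω p ω)`. -/
noncomputable def minEntropy {Ω : Type*} [Fintype Ω] (p : Ω → ℝ) : ℝ :=
  - Real.logb 2 (⨆ ω, p ω)

/-- `(-1)^(Tr y)` where `Tr : 𝔽_{2^ℓ} → 𝔽₂`, `Tr y = y + y² + y⁴ + ⋯ + y^(2^(ℓ-1))`,
is the field trace (which takes values in {0,1}). -/
def chr {F : Type*} [Field F] [DecidableEq F] (ℓ : ℕ) (y : F) : ℝ :=
  if (∑ i ∈ Finset.range ℓ, y ^ (2 ^ i)) = 0 then 1 else -1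

/-- `bias(X, α) = |E_{x←X} (-1)^(Tr ⟨x,α⟩)|`. -/
noncomputable def bias {F : Type*} [Field F] [DecidableEq F] [Fintype F] (ℓ n : ℕ)
    (p : (Fin n → F) → ℝ) (α : Fin n → F) : ℝ :=
  |∑ x, p x * chr ℓ (∑ i, x i * α i)|

/-!
Write `N = 2^(nℓ)`, `χ(y) = (-1)^(Tr y)` and `f̂(α) = ∑ₓ f(x) χ(⟨x,α⟩)`. The map `y ↦ χ(y)` is an
additive character of `𝔽_{2^ℓ}`, so the Fourier transform turns the convolution `Z = X * Y` into
the product `X̂ Ŷ`, and `Z - U` has transform `X̂ Ŷ` off `α = 0` and `0` at `α = 0`. By Parseval and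
the bias bound, `N ∑ (Z - U)² ≤ ε² ∑_α X̂(α)² = ε² N ∑ X²`, and the collision probability `∑ X²` is
at most `max X ≤ 2^(-k)`. Cauchy–Schwarz then gives `∑ |Z - U| ≤ √(N ε² 2^(-k))`.
-/

namespace SmallBias

open Finset

section Trace

def signChar : AddChar (ZMod 2) ℝ where
  toFun t := (-1) ^ t.val
  map_zero_eq_one' := by simp
  map_add_eq_mul' a b := by
    rw [← pow_add, ZMod.val_add, neg_one_pow_eq_pow_mod_two (R := ℝ) (a.val + b.val)]

lemma signChar_apply (t : ZMod 2) : signChar t = if t = 0 then 1 else -1 := by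
  obtain rfl | rfl : t = 0 ∨ t = 1 := by revert t; decide
  · simp [signChar]
  · simp [signChar, ZMod.val_one]

variable {F : Type*} [Field F] [Fintype F] [Algebra (ZMod 2) F] {ℓ : ℕ}

lemma algebraMap_trace_eq_sum_pow_two (hF : Fintype.card F = 2 ^ ℓ) (y : F) :
    algebraMap (ZMod 2) F (Algebra.trace (ZMod 2) F y) = ∑ i ∈ range ℓ, y ^ 2 ^ i := by
  have hrank : Module.finrank (ZMod 2) F = ℓ := by
    apply Nat.pow_right_injective le_rfl
    dsimp only
    rw [← hF, Module.card_eq_pow_finrank (K := ZMod 2), ZMod.card]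
  rw [FiniteField.algebraMap_trace_eq_sum_pow, hrank, Nat.card_zmod]

noncomputable def traceChar : AddChar F ℝ :=
  signChar.compAddMonoidHom (Algebra.trace (ZMod 2) F).toAddMonoidHom

lemma traceChar_ne_one : (traceChar : AddChar F ℝ) ≠ 1 := by
  obtain ⟨y, hy⟩ := Algebra.trace_surjective (ZMod 2) F 1
  refine AddChar.ne_one_iff.2 ⟨y, ?_⟩
  norm_num [traceChar, signChar_apply, hy]

lemma traceChar_apply [DecidableEq F] (hF : Fintype.card F = 2 ^ ℓ) (y : F) :
    (traceChar : AddChar F ℝ) y = chr ℓ y := by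
  simp [traceChar, signChar_apply, chr, ← algebraMap_trace_eq_sum_pow_two hF]

end Trace

section Fourier

lemma _root_.AddChar.map_neg_eq_of_real {G : Type*} [AddCommGroup G] [Finite G]
    (ψ : AddChar G ℝ) (a : G) : ψ (-a) = ψ a := by
  rw [ψ.map_neg_eq_conj, RCLike.conj_to_real]

lemma sum_conv_mul_addChar {G R : Type*} [AddCommGroup G] [Fintype G] [CommRing R]
    (φ : AddChar G R) (X Y : G → R) :
    ∑ w, (∑ x, X x * Y (w - x)) * φ w = (∑ x, X x * φ x) * ∑ y, Y y * φ y := by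
  simp_rw [Finset.sum_mul, Finset.mul_sum]
  rw [Finset.sum_comm]
  refine Finset.sum_congr rfl fun x _ => ?_
  refine Fintype.sum_equiv (Equiv.subRight x) _ _ fun w => ?_
  rw [Equiv.subRight_apply, ← sub_add_cancel w x, φ.map_add_eq_mul, add_sub_cancel_right]
  ring

variable {F R ι : Type*} [Field F] [CommRing R] [Fintype ι]

def dotChar (ψ : AddChar F R) (α : ι → F) : AddChar (ι → F) R :=
  ψ.compAddMonoidHom
    { toFun := fun x => x ⬝ᵥ α, map_zero' := zero_dotProduct α,
      map_add' := fun x y => add_dotProduct x y α }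

@[simp]
lemma dotChar_apply (ψ : AddChar F R) (α x : ι → F) : dotChar ψ α x = ψ (x ⬝ᵥ α) := rfl

lemma dotChar_ne_one {ψ : AddChar F R} (hψ : ψ ≠ 1) {α : ι → F} (hα : α ≠ 0) :
    dotChar ψ α ≠ 1 := by
  classical
  obtain ⟨i, hi⟩ := Function.ne_iff.1 hα
  obtain ⟨c, hc⟩ := AddChar.ne_one_iff.1 hψ
  refine AddChar.ne_one_iff.2 ⟨Pi.single i (c / α i), ?_⟩
  rwa [dotChar_apply, single_dotProduct, div_mul_cancel₀ c hi]

variable [Fintype F]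

lemma apply_dotProduct_mul_apply_dotProduct (ψ : AddChar F ℝ) (x y α : ι → F) :
    ψ (x ⬝ᵥ α) * ψ (y ⬝ᵥ α) = ψ (α ⬝ᵥ (x - y)) := by
  rw [← ψ.map_neg_eq_of_real (y ⬝ᵥ α), ← ψ.map_add_eq_mul, ← neg_dotProduct, ← add_dotProduct,
    ← sub_eq_add_neg, dotProduct_comm]

variable [DecidableEq ι]

def dft (ψ : AddChar F ℝ) (f : (ι → F) → ℝ) (α : ι → F) : ℝ :=
  ∑ x, f x * ψ (x ⬝ᵥ α)

lemma dft_zero_right (ψ : AddChar F ℝ) (f : (ι → F) → ℝ) : dft ψ f 0 = ∑ x, f x := by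
  simp [dft]

lemma dft_sub (ψ : AddChar F ℝ) (f g : (ι → F) → ℝ) (α : ι → F) :
    dft ψ (fun x => f x - g x) α = dft ψ f α - dft ψ g α := by
  simp only [dft, sub_mul, sum_sub_distrib]

lemma dft_conv (ψ : AddChar F ℝ) (X Y : (ι → F) → ℝ) (α : ι → F) :
    dft ψ (fun w => ∑ x, X x * Y (w - x)) α = dft ψ X α * dft ψ Y α :=
  sum_conv_mul_addChar (dotChar ψ α) X Y

variable [DecidableEq F]

lemma sum_apply_dotProduct [IsDomain R] {ψ : AddChar F R} (hψ : ψ ≠ 1) (α : ι → F) :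
    ∑ x, ψ (x ⬝ᵥ α) = if α = 0 then (Fintype.card (ι → F) : R) else 0 := by
  by_cases hα : α = 0
  · simp [hα]
  · rw [if_neg hα]
    exact AddChar.sum_eq_zero_of_ne_one (dotChar_ne_one hψ hα)

lemma dft_const {ψ : AddChar F ℝ} (hψ : ψ ≠ 1) (c : ℝ) (α : ι → F) :
    dft ψ (fun _ => c) α = if α = 0 then c * Fintype.card (ι → F) else 0 := by
  rw [dft, ← mul_sum, sum_apply_dotProduct hψ, mul_ite, mul_zero]

lemma sum_dft_sq {ψ : AddChar F ℝ} (hψ : ψ ≠ 1) (f : (ι → F) → ℝ) :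
    ∑ α, dft ψ f α ^ 2 = Fintype.card (ι → F) * ∑ x, f x ^ 2 := by
  calc ∑ α, dft ψ f α ^ 2
      = ∑ α, ∑ x, ∑ y, f x * f y * (ψ (x ⬝ᵥ α) * ψ (y ⬝ᵥ α)) := by
        simp_rw [dft, sq, sum_mul_sum]
        exact sum_congr rfl fun _ _ => sum_congr rfl fun _ _ => sum_congr rfl fun _ _ => by ring
    _ = ∑ x, ∑ y, f x * f y * ∑ α, ψ (α ⬝ᵥ (x - y)) := by
        simp_rw [apply_dotProduct_mul_apply_dotProduct, mul_sum]
        rw [sum_comm]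
        exact sum_congr rfl fun _ _ => sum_comm
    _ = Fintype.card (ι → F) * ∑ x, f x ^ 2 := by
        simp_rw [sum_apply_dotProduct hψ, sub_eq_zero, mul_ite, mul_zero, sum_ite_eq, mem_univ,
          if_true, mul_sum]
        exact sum_congr rfl fun _ _ => by ring

lemma sum_sq_conv_sub_uniform_le {ψ : AddChar F ℝ} (hψ : ψ ≠ 1) {X Y : (ι → F) → ℝ} {ε : ℝ}
    (hX1 : ∑ x, X x = 1) (hY1 : ∑ y, Y y = 1) (hY : ∀ α, α ≠ 0 → |dft ψ Y α| ≤ ε) :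
    ∑ w, (∑ x, X x * Y (w - x) - 1 / Fintype.card (ι → F)) ^ 2 ≤ ε ^ 2 * ∑ x, X x ^ 2 := by
  have hN : (0 : ℝ) < Fintype.card (ι → F) := by exact_mod_cast Fintype.card_pos
  have hdft : ∀ α, dft ψ (fun w => ∑ x, X x * Y (w - x) - 1 / Fintype.card (ι → F)) α =
      if α = 0 then 0 else dft ψ X α * dft ψ Y α := by
    intro α
    rw [dft_sub, dft_conv, dft_const hψ]
    split_ifs with hα
    · rw [hα, dft_zero_right, dft_zero_right, hX1, hY1, one_div_mul_cancel hN.ne', mul_one,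
        sub_self]
    · rw [sub_zero]
  refine le_of_mul_le_mul_left ?_ hN
  calc Fintype.card (ι → F) * ∑ w, (∑ x, X x * Y (w - x) - 1 / Fintype.card (ι → F)) ^ 2
      = ∑ α, (if α = 0 then 0 else dft ψ X α * dft ψ Y α) ^ 2 := by
        rw [← sum_dft_sq hψ]
        simp_rw [hdft]
    _ ≤ ∑ α, ε ^ 2 * dft ψ X α ^ 2 := by
        refine sum_le_sum fun α _ => ?_
        split_ifs with hα
        · rw [zero_pow two_ne_zero]
          positivity
        · rw [mul_pow, mul_comm]
          exact mul_le_mul_of_nonneg_right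
            (sq_le_sq' (abs_le.1 (hY α hα)).1 (abs_le.1 (hY α hα)).2) (sq_nonneg _)
    _ = Fintype.card (ι → F) * (ε ^ 2 * ∑ x, X x ^ 2) := by
        rw [← mul_sum, sum_dft_sq hψ]
        ring

end Fourier

section Distributions

variable {Ω : Type*} [Fintype Ω] {p : Ω → ℝ}

lemma le_two_rpow_neg_of_le_minEntropy (hp : ∑ ω, p ω = 1) {k : ℝ} (hk : k ≤ minEntropy p)
    (ω : Ω) : p ω ≤ 2 ^ (-k) := by
  have hbdd : BddAbove (Set.range p) := (Set.finite_range p).bddAbove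
  obtain ⟨ω₀, -, hω₀⟩ : ∃ ω₀ ∈ univ, (0 : ℝ) < p ω₀ :=
    exists_lt_of_sum_lt (by rw [hp, sum_const_zero]; exact one_pos)
  have hsup : 0 < ⨆ ω, p ω := hω₀.trans_le (le_ciSup hbdd ω₀)
  have hlog : Real.logb 2 (⨆ ω, p ω) ≤ -k := by
    rw [minEntropy] at hk
    linarith
  exact (le_ciSup hbdd ω).trans ((Real.logb_le_iff_le_rpow one_lt_two hsup).1 hlog)

lemma sum_sq_le_of_forall_le (hp0 : ∀ ω, 0 ≤ p ω) (hp1 : ∑ ω, p ω = 1) {m : ℝ}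
    (hm : ∀ ω, p ω ≤ m) : ∑ ω, p ω ^ 2 ≤ m :=
  calc ∑ ω, p ω ^ 2 ≤ ∑ ω, m * p ω :=
        sum_le_sum fun ω _ => by rw [sq]; exact mul_le_mul_of_nonneg_right (hm ω) (hp0 ω)
    _ = m := by rw [← mul_sum, hp1, mul_one]

lemma SD_le_sqrt (p q : Ω → ℝ) :
    SD p q ≤ √(Fintype.card Ω * ∑ ω, (p ω - q ω) ^ 2) / 2 := by
  rw [SD]
  gcongr
  apply Real.le_sqrt_of_sq_le
  have := sq_sum_le_card_mul_sum_sq (s := univ) (f := fun ω => |p ω - q ω|)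
  rwa [card_univ, sum_congr rfl fun ω _ => sq_abs (p ω - q ω)] at this

end Distributions

lemma bias_eq_abs_dft {F : Type*} [Field F] [Fintype F] [DecidableEq F] [Algebra (ZMod 2) F]
    {ℓ n : ℕ} (hF : Fintype.card F = 2 ^ ℓ) (p : (Fin n → F) → ℝ) (α : Fin n → F) :
    bias ℓ n p α = |dft traceChar p α| := by
  simp only [bias, dft, traceChar_apply hF]
  rfl

end SmallBias

open SmallBias

theorem small_biased_masking_general (ℓ n : ℕ) (k ε : ℝ) (hε : 0 ≤ ε)
    (F : Type*) [Field F] [Fintype F] [DecidableEq F] (hF : Fintype.card F = 2 ^ ℓ)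
    (X Y : (Fin n → F) → ℝ)
    (hX0 : ∀ x, 0 ≤ X x) (hX1 : ∑ x, X x = 1)
    (hY1 : ∑ y, Y y = 1)
    (hXent : k ≤ minEntropy X)
    (hYbias : ∀ α : Fin n → F, α ≠ 0 → bias ℓ n Y α ≤ ε) :
    SD (fun w => ∑ x, X x * Y (w - x)) (fun _ : Fin n → F => 1 / 2 ^ (n * ℓ)) ≤
      (2 : ℝ) ^ (((n * ℓ : ℝ) - k) / 2 - 1) * ε := by
  have := charP_of_card_eq_prime_pow hF
  let := ZMod.algebra F 2
  have hcard : (Fintype.card (Fin n → F) : ℝ) = 2 ^ (n * ℓ) := by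
    simp [hF, ← pow_mul, mul_comm]
  have hcoll : ∑ x, X x ^ 2 ≤ 2 ^ (-k) :=
    sum_sq_le_of_forall_le hX0 hX1 (le_two_rpow_neg_of_le_minEntropy hX1 hXent)
  have hL2 := sum_sq_conv_sub_uniform_le traceChar_ne_one hX1 hY1
    fun α hα => bias_eq_abs_dft hF Y α ▸ hYbias α hα
  have hexp : (2 : ℝ) ^ (n * ℓ) * (ε ^ 2 * 2 ^ (-k)) =
      ((2 : ℝ) ^ (((n * ℓ : ℝ) - k) / 2) * ε) ^ 2 := by
    rw [mul_pow, ← Real.rpow_mul_natCast zero_le_two, ← Real.rpow_natCast 2 (n * ℓ),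
      show ((n * ℓ : ℝ) - k) / 2 * (2 : ℕ) = ((n * ℓ : ℕ) : ℝ) + -k by push_cast; ring,
      Real.rpow_add two_pos]
    ring
  calc SD _ _ ≤ √(2 ^ (n * ℓ) * (ε ^ 2 * 2 ^ (-k))) / 2 := by
        refine (SD_le_sqrt _ _).trans ?_
        rw [hcard] at hL2 ⊢
        gcongr
        exact hL2.trans (by gcongr)
    _ = (2 : ℝ) ^ (((n * ℓ : ℝ) - k) / 2 - 1) * ε := by
        rw [hexp, Real.sqrt_sq (by positivity), Real.rpow_sub_one two_ne_zero]
        ring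

/-- **Small-biased masking lemma.**  If `X` has min-entropy at least `k` and `Y` is
`ε`-small-biased (both distributions on `𝔽_{2^ℓ}ⁿ`, independent), then `X + Y` is
`2^((nℓ-k)/2 - 1)·ε`-close to uniform in statistical distance. -/
theorem small_biased_masking (ℓ n : ℕ) (k ε : ℝ) (hk : 0 ≤ k) (hε : 0 ≤ ε)
    (F : Type*) [Field F] [Fintype F] [DecidableEq F] (hF : Fintype.card F = 2 ^ ℓ)
    (X Y : (Fin n → F) → ℝ)
    (hX0 : ∀ x, 0 ≤ X x) (hX1 : ∑ x, X x = 1)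
    (hY0 : ∀ y, 0 ≤ Y y) (hY1 : ∑ y, Y y = 1)
    (hXent : k ≤ minEntropy X)
    (hYbias : ∀ α : Fin n → F, α ≠ 0 → bias ℓ n Y α ≤ ε) :
    SD (fun w => ∑ x, X x * Y (w - x)) (fun _ : Fin n → F => 1 / 2 ^ (n * ℓ)) ≤
      (2 : ℝ) ^ (((n * ℓ : ℝ) - k) / 2 - 1) * ε :=
  small_biased_masking_general ℓ n k ε hε F hF X Y hX0 hX1 hY1 hXent hYbias
end

section
/- (Average-case inner-product extraction.) Let n, m ∈ ℕ, ε > 0 and t > 0 satisfy n − m − t ≥ 2·log₂(1/ε). Let P be uniformly distributed on 𝔽₂ⁿ, let Z be any random variable jointly distributed with P whose support has size at most 2^m, and let x be uniformly distributed on 𝔽₂ⁿ independent of (P, Z). Then with probability at least 1 − 2^{−t} over z ← Z, the statistical distance between the conditional distribution of (x, ⟨x, P⟩) given Z = z and the uniform distribution on 𝔽₂ⁿ × 𝔽₂ is at most ε, where ⟨x, P⟩ = ∑ᵢ xᵢPᵢ computed in 𝔽₂. -/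
open Finset

/-- Inner product over 𝔽₂. -/
def ip {n : ℕ} (x y : Fin n → ZMod 2) : ZMod 2 := ∑ i, x i * y i

/-- Marginal of the second component of a joint distribution. -/
noncomputable def margZ {A B : Type*} [Fintype A] (p : A × B → ℝ) : B → ℝ :=
  fun b => ∑ a, p (a, b)

lemma zmod2_ne_zero {c : ZMod 2} (h : c ≠ 0) : c = 1 := by
  revert h; revert c; decide

lemma ip_add_left {n : ℕ} (x y v : Fin n → ZMod 2) :
    ip (x + y) v = ip x v + ip y v := by
  simp [ip, add_mul, Finset.sum_add_distrib]

lemma ip_single {n : ℕ} (i : Fin n) (v : Fin n → ZMod 2) :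
    ip (Pi.single i 1) v = v i := by
  rw [ip, Finset.sum_eq_single i]
  · simp
  · intro j _ hj; simp [Pi.single_eq_of_ne hj]
  · simp

lemma ip_sub_right {n : ℕ} (x a a' : Fin n → ZMod 2) :
    ip x (a - a') = ip x a - ip x a' := by
  simp [ip, mul_sub, Finset.sum_sub_distrib]

lemma count_half {n : ℕ} {v : Fin n → ZMod 2} (hv : v ≠ 0) :
    ((Finset.univ.filter fun x : Fin n → ZMod 2 => ip x v = 0).card : ℝ) = 2 ^ n / 2 := by
  obtain ⟨i, hi⟩ : ∃ i, v i ≠ 0 := by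
    by_contra h; push_neg at h; exact hv (funext h)
  have hvi : v i = 1 := zmod2_ne_zero hi
  have hss : (Pi.single i 1 : Fin n → ZMod 2) + (Pi.single i 1) = 0 := by
    funext j
    simp only [Pi.add_apply, Pi.zero_apply, Pi.single_apply]
    split <;> decide
  have hflip : ∀ x : Fin n → ZMod 2, ip (x + Pi.single i 1) v = ip x v + 1 := by
    intro x; rw [ip_add_left, ip_single, hvi]
  have hcard : (Finset.univ.filter fun x : Fin n → ZMod 2 => ip x v = 0).card
      = (Finset.univ.filter fun x : Fin n → ZMod 2 => ¬ ip x v = 0).card := by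
    apply Finset.card_bij' (fun x _ => x + Pi.single i 1) (fun x _ => x + Pi.single i 1)
    · intro x _; rw [add_assoc, hss, add_zero]
    · intro x _; rw [add_assoc, hss, add_zero]
    · intro x hx
      simp only [Finset.mem_filter, Finset.mem_univ, true_and] at hx ⊢
      rw [hflip, hx]; decide
    · intro x hx
      simp only [Finset.mem_filter, Finset.mem_univ, true_and] at hx ⊢
      rw [hflip, zmod2_ne_zero hx]; decide
  have htot := Finset.card_filter_add_card_filter_not
    (s := (Finset.univ : Finset (Fin n → ZMod 2))) (p := fun x => ip x v = 0)
  rw [← hcard] at htot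
  have hcu : (Finset.univ : Finset (Fin n → ZMod 2)).card = 2 ^ n := by
    simp [Finset.card_univ]
  rw [hcu] at htot
  have : ((Finset.univ.filter fun x : Fin n → ZMod 2 => ip x v = 0).card : ℝ) * 2 = 2 ^ n := by
    exact_mod_cast congrArg (Nat.cast : ℕ → ℝ) (by omega : (Finset.univ.filter fun x : Fin n → ZMod 2 => ip x v = 0).card * 2 = 2 ^ n)
  linarith

lemma inner_count {n : ℕ} (a a' : Fin n → ZMod 2) :
    ∑ x : Fin n → ZMod 2, (if ip x a = ip x a' then (1:ℝ) else 0)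
      = 2 ^ n / 2 + if a = a' then 2 ^ n / 2 else 0 := by
  by_cases h : a = a'
  · subst h; simp [Finset.card_univ]; try ring
  · have hv : a - a' ≠ 0 := sub_ne_zero.mpr h
    have : ∀ x : Fin n → ZMod 2, (ip x a = ip x a') ↔ ip x (a - a') = 0 := by
      intro x; rw [ip_sub_right, sub_eq_zero]
    simp only [Finset.sum_boole]
    rw [if_neg h, add_zero]
    rw [show (Finset.univ.filter fun x : Fin n → ZMod 2 => ip x a = ip x a')
        = Finset.univ.filter fun x => ip x (a - a') = 0 from by
      apply Finset.filter_congr; intro x _; simp [this x]]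
    exact count_half hv

lemma sum_swap4 {α β γ κ : Type*} [Fintype α] [Fintype β] [Fintype γ] [Fintype κ]
    (g : α → β → γ → κ → ℝ) :
    ∑ x : γ, ∑ c : κ, ∑ a : α, ∑ a' : β, g a a' x c
      = ∑ a : α, ∑ a' : β, ∑ x : γ, ∑ c : κ, g a a' x c := by
  calc ∑ x : γ, ∑ c : κ, ∑ a : α, ∑ a' : β, g a a' x c
      = ∑ x : γ, ∑ a : α, ∑ a' : β, ∑ c : κ, g a a' x c := by
        refine Finset.sum_congr rfl fun x _ => ?_
        rw [Finset.sum_comm]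
        exact Finset.sum_congr rfl fun a _ => Finset.sum_comm
    _ = ∑ a : α, ∑ x : γ, ∑ a' : β, ∑ c : κ, g a a' x c := Finset.sum_comm
    _ = _ := Finset.sum_congr rfl fun a _ => Finset.sum_comm

lemma core {n : ℕ} (r : (Fin n → ZMod 2) → ℝ) (hr0 : ∀ a, 0 ≤ r a)
    (hr1 : ∑ a, r a = 1) {δ : ℝ} (hδ : ∀ a, r a ≤ δ) :
    SD (fun w : (Fin n → ZMod 2) × ZMod 2 =>
        (1 / 2 ^ n) * ∑ a, if ip w.1 a = w.2 then r a else 0)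
      (fun _ => 1 / 2 ^ (n + 1)) ≤ Real.sqrt δ / 2 := by
  set D : (Fin n → ZMod 2) × ZMod 2 → ℝ :=
    fun w => (1 / 2 ^ n) * ∑ a, if ip w.1 a = w.2 then r a else 0 with hD
  set Col : ℝ := ∑ a, (r a) ^ 2 with hColdef
  have hδ0 : (0:ℝ) ≤ δ := le_trans (hr0 0) (hδ 0)
  have hCol0 : 0 ≤ Col := Finset.sum_nonneg fun a _ => sq_nonneg _
  have hColδ : Col ≤ δ := by
    calc Col = ∑ a, (r a) * (r a) := by simp [hColdef, sq]
      _ ≤ ∑ a, δ * r a := Finset.sum_le_sum fun a _ =>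
          mul_le_mul_of_nonneg_right (hδ a) (hr0 a)
      _ = δ := by rw [← Finset.mul_sum, hr1, mul_one]
  -- sum of D is 1
  have csum1 : ∀ (x : Fin n → ZMod 2) (a : Fin n → ZMod 2),
      ∑ c : ZMod 2, (if ip x a = c then r a else 0) = r a := by
    intro x a; simp [Finset.sum_ite_eq]
  have hsum : ∑ w : (Fin n → ZMod 2) × ZMod 2, D w = 1 := by
    rw [Fintype.sum_prod_type]
    have hx : ∀ x : Fin n → ZMod 2,
        ∑ c : ZMod 2, D (x, c) = (1 / 2 ^ n : ℝ) := by
      intro x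
      simp only [hD]
      rw [← Finset.mul_sum, Finset.sum_comm]
      rw [Finset.sum_congr rfl fun a _ => csum1 x a, hr1, mul_one]
    rw [Finset.sum_congr rfl fun x _ => hx x, Finset.sum_const, Finset.card_univ]
    simp
  -- c-sum of product of indicators
  have csum2 : ∀ (x a a' : Fin n → ZMod 2),
      ∑ c : ZMod 2, (if ip x a = c then r a else 0) * (if ip x a' = c then r a' else 0)
        = if ip x a = ip x a' then r a * r a' else 0 := by
    intro x a a'
    rw [Finset.sum_eq_single (ip x a)]
    · by_cases h : ip x a = ip x a'
      · rw [if_pos rfl, if_pos h.symm, if_pos h]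
      · rw [if_pos rfl, if_neg (fun hh => h hh.symm), if_neg h, mul_zero]
    · intro c _ hc; rw [if_neg (fun h => hc h.symm), zero_mul]
    · simp
  have xsum : ∀ (a a' : Fin n → ZMod 2),
      ∑ x : Fin n → ZMod 2, (if ip x a = ip x a' then r a * r a' else 0)
        = r a * r a' * ((2:ℝ) ^ n / 2 + if a = a' then (2:ℝ) ^ n / 2 else 0) := by
    intro a a'
    have : ∀ x : Fin n → ZMod 2, (if ip x a = ip x a' then r a * r a' else 0)
        = r a * r a' * (if ip x a = ip x a' then (1:ℝ) else 0) := by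
      intro x; split <;> simp
    rw [Finset.sum_congr rfl fun x _ => this x, ← Finset.mul_sum, inner_count]
  -- sum of squares of D
  have hsq : ∑ w : (Fin n → ZMod 2) × ZMod 2, (D w) ^ 2 = (1 + Col) / 2 ^ (n + 1) := by
    have step : ∑ w : (Fin n → ZMod 2) × ZMod 2, (D w) ^ 2
        = (1 / 2 ^ n : ℝ) ^ 2 * ∑ a, ∑ a', ∑ x : Fin n → ZMod 2, ∑ c : ZMod 2,
            (if ip x a = c then r a else 0) * (if ip x a' = c then r a' else 0) := by
      rw [Fintype.sum_prod_type]
      have hx : ∀ (x : Fin n → ZMod 2) (c : ZMod 2), (D (x, c)) ^ 2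
          = (1 / 2 ^ n : ℝ) ^ 2 * ∑ a, ∑ a',
              (if ip x a = c then r a else 0) * (if ip x a' = c then r a' else 0) := by
        intro x c
        simp only [hD]
        rw [mul_pow, sq (∑ a, if ip x a = c then r a else 0), Finset.sum_mul_sum]
      have hx2 : ∀ x : Fin n → ZMod 2, ∑ c : ZMod 2, D (x, c) ^ 2
          = (1 / 2 ^ n : ℝ) ^ 2 * ∑ c : ZMod 2, ∑ a, ∑ a',
              (if ip x a = c then r a else 0) * (if ip x a' = c then r a' else 0) := by
        intro x
        rw [Finset.mul_sum]
        exact Finset.sum_congr rfl fun c _ => hx x c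
      rw [Finset.sum_congr rfl fun x _ => hx2 x, ← Finset.mul_sum]
      congr 1
      exact sum_swap4 (fun a a' x c => (if ip x a = c then r a else 0) * (if ip x a' = c then r a' else 0))
    rw [step]
    have inner : ∀ (a a' : Fin n → ZMod 2),
        ∑ x : Fin n → ZMod 2, ∑ c : ZMod 2,
            (if ip x a = c then r a else 0) * (if ip x a' = c then r a' else 0)
          = r a * r a' * ((2:ℝ) ^ n / 2 + if a = a' then (2:ℝ) ^ n / 2 else 0) := by
      intro a a'
      rw [Finset.sum_congr rfl fun x _ => csum2 x a a', xsum]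
    rw [Finset.sum_congr rfl fun a _ => Finset.sum_congr rfl fun a' _ => inner a a']
    have expand : ∑ a, ∑ a', r a * r a' * ((2:ℝ) ^ n / 2 + if a = a' then (2:ℝ) ^ n / 2 else 0)
        = (2:ℝ) ^ n / 2 * (1 + Col) := by
      have : ∀ a a' : Fin n → ZMod 2,
          r a * r a' * ((2:ℝ) ^ n / 2 + if a = a' then (2:ℝ) ^ n / 2 else 0)
            = (2:ℝ) ^ n / 2 * (r a * r a') + (if a' = a then (2:ℝ)^n/2 * (r a * r a') else 0) := by
        intro a a'
        by_cases h : a = a'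
        · rw [if_pos h, if_pos h.symm]; ring
        · rw [if_neg h, if_neg (fun hh => h hh.symm)]; ring
      rw [Finset.sum_congr rfl fun a _ => Finset.sum_congr rfl fun a' _ => this a a']
      simp only [Finset.sum_add_distrib]
      have e1 : ∑ a, ∑ a', (2:ℝ) ^ n / 2 * (r a * r a') = (2:ℝ)^n/2 := by
        simp only [← Finset.mul_sum]
        rw [hr1]
        simp [hr1]
      have e2 : ∑ a, ∑ a', (if a' = a then (2:ℝ)^n/2 * (r a * r a') else 0)
          = (2:ℝ)^n/2 * Col := by
        have : ∀ a : Fin n → ZMod 2,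
            ∑ a', (if a' = a then (2:ℝ)^n/2 * (r a * r a') else 0) = (2:ℝ)^n/2 * (r a)^2 := by
          intro a
          rw [Finset.sum_ite_eq' Finset.univ a (fun a' => (2:ℝ)^n/2 * (r a * r a'))]
          simp [sq]; try ring
        rw [Finset.sum_congr rfl fun a _ => this a, ← Finset.mul_sum]
      rw [e1, e2]; ring
    rw [expand]
    have h2 : (2:ℝ) ^ n ≠ 0 := by positivity
    field_simp
    try ring
  -- variance computation
  have hcard : ((Finset.univ : Finset ((Fin n → ZMod 2) × ZMod 2)).card : ℝ) = 2 ^ n * 2 := by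
    simp [Finset.card_univ]
  have hvar : ∑ w : (Fin n → ZMod 2) × ZMod 2, (D w - 1 / 2 ^ (n + 1)) ^ 2
      = Col / 2 ^ (n + 1) := by
    have : ∀ w : (Fin n → ZMod 2) × ZMod 2, (D w - 1 / 2 ^ (n + 1)) ^ 2
        = (D w)^2 - 2 * (1/2^(n+1)) * D w + (1/2^(n+1))^2 := by intro w; ring
    rw [Finset.sum_congr rfl fun w _ => this w]
    simp only [Finset.sum_add_distrib, Finset.sum_sub_distrib, ← Finset.mul_sum,
      Finset.sum_const, Finset.card_univ]
    rw [hsq, hsum]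
    have : ((Fintype.card ((Fin n → ZMod 2) × ZMod 2)) : ℝ) = 2 ^ n * 2 := by
      simpa using hcard
    rw [show (Fintype.card ((Fin n → ZMod 2) × ZMod 2)) • ((1:ℝ)/2^(n+1))^2
        = ((Fintype.card ((Fin n → ZMod 2) × ZMod 2)) : ℝ) * ((1:ℝ)/2^(n+1))^2 from
      nsmul_eq_mul _ _, this]
    have h2 : (2:ℝ) ^ (n+1) ≠ 0 := by positivity
    field_simp
    ring
  -- Cauchy-Schwarz
  have hcs := sq_sum_le_card_mul_sum_sq (s := (Finset.univ : Finset ((Fin n → ZMod 2) × ZMod 2)))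
    (f := fun w => |D w - 1 / 2 ^ (n + 1)|)
  simp only [sq_abs] at hcs
  rw [hvar, hcard] at hcs
  have hle : (∑ w : (Fin n → ZMod 2) × ZMod 2, |D w - 1 / 2 ^ (n + 1)|) ^ 2 ≤ δ := by
    refine hcs.trans ?_
    have : (2:ℝ) ^ n * 2 * (Col / 2 ^ (n + 1)) = Col := by
      have h2 : (2:ℝ) ^ (n+1) ≠ 0 := by positivity
      field_simp; ring
    rw [this]; exact hColδ
  have habs : ∑ w : (Fin n → ZMod 2) × ZMod 2, |D w - 1 / 2 ^ (n + 1)| ≤ Real.sqrt δ := by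
    have h0 : 0 ≤ ∑ w : (Fin n → ZMod 2) × ZMod 2, |D w - 1 / 2 ^ (n + 1)| :=
      Finset.sum_nonneg fun w _ => abs_nonneg _
    calc ∑ w : (Fin n → ZMod 2) × ZMod 2, |D w - 1 / 2 ^ (n + 1)|
        = Real.sqrt ((∑ w : (Fin n → ZMod 2) × ZMod 2, |D w - 1 / 2 ^ (n + 1)|)^2) :=
          (Real.sqrt_sq h0).symm
      _ ≤ Real.sqrt δ := Real.sqrt_le_sqrt hle
  rw [SD]
  exact div_le_div_of_nonneg_right habs (by norm_num) |>.trans_eq rfl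


/-- **Average-case inner-product extraction.**
Let `P` be uniform on 𝔽₂ⁿ, `Z` jointly distributed with `P` with support of size at most
`2^m`, and `x` uniform on 𝔽₂ⁿ independent of `(P, Z)`.  If `n - m - t ≥ 2 log₂(1/ε)`, then
with probability at least `1 - 2^(-t)` over `z ← Z`, the conditional distribution of
`(x, ⟨x, P⟩)` given `Z = z` is `ε`-close to uniform on 𝔽₂ⁿ × 𝔽₂. -/
theorem avg_case_ip_extraction
    (n : ℕ) (m ε t : ℝ) (hε : 0 < ε) (ht : 0 < t)
    (hpar : 2 * Real.logb 2 (1 / ε) ≤ (n : ℝ) - m - t)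
    (B : Type*) [Fintype B]
    (p : (Fin n → ZMod 2) × B → ℝ)
    (hp0 : ∀ w, 0 ≤ p w) (hp1 : ∑ w, p w = 1)
    (hPunif : ∀ a : Fin n → ZMod 2, ∑ b, p (a, b) = 1 / 2 ^ n)
    (hsupp : (((Finset.univ : Finset B).filter (fun b => margZ p b ≠ 0)).card : ℝ) ≤
      (2 : ℝ) ^ m) :
    1 - (2 : ℝ) ^ (-t) ≤
      ∑ z ∈ (Finset.univ : Finset B).filter (fun z =>
          SD (fun w : (Fin n → ZMod 2) × ZMod 2 =>
                (1 / 2 ^ n) * ∑ a, if ip w.1 a = w.2 then p (a, z) / margZ p z else 0)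
              (fun _ => 1 / 2 ^ (n + 1)) ≤ ε),
        margZ p z := by
  classical
  set δ' : ℝ := (2 : ℝ) ^ (m + t - n) with hδ'def
  have hδ'pos : 0 < δ' := Real.rpow_pos_of_pos two_pos _
  have hq0 : ∀ z, 0 ≤ margZ p z := fun z => Finset.sum_nonneg fun a _ => hp0 _
  have hpa : ∀ (a : Fin n → ZMod 2) (z : B), p (a, z) ≤ 1 / 2 ^ n := by
    intro a z
    rw [← hPunif a]
    exact Finset.single_le_sum (fun b _ => hp0 _) (Finset.mem_univ z)
  set Good : Finset B := (Finset.univ : Finset B).filter (fun z =>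
      SD (fun w : (Fin n → ZMod 2) × ZMod 2 =>
            (1 / 2 ^ n) * ∑ a, if ip w.1 a = w.2 then p (a, z) / margZ p z else 0)
          (fun _ => 1 / 2 ^ (n + 1)) ≤ ε) with hGooddef
  set Supp : Finset B := (Finset.univ : Finset B).filter (fun b => margZ p b ≠ 0) with hSuppdef
  set Bad : Finset B := (Finset.univ : Finset B).filter
      (fun z => ∃ a, δ' * margZ p z < p (a, z)) with hBaddef
  -- Bad is contained in the support
  have hBadSupp : Bad ⊆ Supp := by
    intro z hz
    simp only [hBaddef, Finset.mem_filter, Finset.mem_univ, true_and] at hz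
    obtain ⟨a, ha⟩ := hz
    simp only [hSuppdef, Finset.mem_filter, Finset.mem_univ, true_and]
    intro h0
    rw [h0, mul_zero] at ha
    have : p (a, z) ≤ 0 := by
      have := Finset.single_le_sum (f := fun a => p (a, z)) (fun a _ => hp0 _)
        (Finset.mem_univ a)
      rw [show (∑ a, p (a, z)) = margZ p z from rfl, h0] at this
      linarith [hp0 (a, z), this]
    linarith
  -- each bad z has small mass
  have hBadq : ∀ z ∈ Bad, margZ p z ≤ (2 : ℝ) ^ (-(m + t)) := by
    intro z hz
    simp only [hBaddef, Finset.mem_filter, Finset.mem_univ, true_and] at hz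
    obtain ⟨a, ha⟩ := hz
    have h1 : δ' * margZ p z < 1 / 2 ^ n := lt_of_lt_of_le ha (hpa a z)
    have h2 : (1 : ℝ) / 2 ^ n = (2 : ℝ) ^ (-(n : ℝ)) := by
      rw [Real.rpow_neg (by norm_num), Real.rpow_natCast, one_div]
    have h3 : margZ p z < (2 : ℝ) ^ (-(n : ℝ)) / δ' := by
      rw [lt_div_iff₀ hδ'pos, mul_comm]
      rw [← h2]; exact h1
    have h4 : (2 : ℝ) ^ (-(n : ℝ)) / δ' = (2 : ℝ) ^ (-(m + t)) := by
      rw [hδ'def, ← Real.rpow_sub two_pos]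
      ring_nf
    linarith [h3, h4.symm ▸ h3]
  -- total bad mass is at most 2^(-t)
  have hBadSum : ∑ z ∈ Bad, margZ p z ≤ (2 : ℝ) ^ (-t) := by
    calc ∑ z ∈ Bad, margZ p z ≤ Bad.card • ((2 : ℝ) ^ (-(m + t))) :=
          Finset.sum_le_card_nsmul _ _ _ hBadq
      _ = (Bad.card : ℝ) * (2 : ℝ) ^ (-(m + t)) := nsmul_eq_mul _ _
      _ ≤ (2 : ℝ) ^ m * (2 : ℝ) ^ (-(m + t)) := by
          apply mul_le_mul_of_nonneg_right _ (le_of_lt (Real.rpow_pos_of_pos two_pos _))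
          calc (Bad.card : ℝ) ≤ (Supp.card : ℝ) := by
                exact_mod_cast Finset.card_le_card hBadSupp
            _ ≤ (2 : ℝ) ^ m := hsupp
      _ = (2 : ℝ) ^ (-t) := by
          rw [← Real.rpow_add two_pos]; ring_nf
  -- good z's
  have hεb : Real.sqrt δ' / 2 ≤ ε := by
    have hlogb : Real.logb 2 (1 / ε) = -Real.logb 2 ε := by
      rw [one_div, Real.logb_inv]
    rw [hlogb] at hpar
    have hexp : (m + t - n) * (1 / 2) ≤ Real.logb 2 ε := by linarith
    have hsqrt : Real.sqrt δ' = (2 : ℝ) ^ ((m + t - n) * (1 / 2)) := by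
      rw [hδ'def, Real.rpow_mul (by norm_num : (0:ℝ) ≤ 2), Real.sqrt_eq_rpow]
    have : Real.sqrt δ' ≤ ε := by
      rw [hsqrt]
      calc (2 : ℝ) ^ ((m + t - n) * (1 / 2)) ≤ (2 : ℝ) ^ (Real.logb 2 ε) :=
            Real.rpow_le_rpow_of_exponent_le one_le_two hexp
        _ = ε := Real.rpow_logb two_pos (by norm_num) hε
    linarith
  have hGoodz : Supp \ Bad ⊆ Good := by
    intro z hz
    rw [Finset.mem_sdiff] at hz
    obtain ⟨hzS, hzB⟩ := hz
    simp only [hSuppdef, Finset.mem_filter, Finset.mem_univ, true_and] at hzS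
    simp only [hBaddef, Finset.mem_filter, Finset.mem_univ, true_and, not_exists, not_lt] at hzB
    have hqpos : 0 < margZ p z := lt_of_le_of_ne (hq0 z) (Ne.symm hzS)
    simp only [hGooddef, Finset.mem_filter, Finset.mem_univ, true_and]
    have hcore := core (fun a => p (a, z) / margZ p z)
      (fun a => div_nonneg (hp0 _) (hq0 z))
      (by
        rw [← Finset.sum_div]
        rw [show (∑ a, p (a, z)) = margZ p z from rfl]
        exact div_self hzS)
      (δ := δ')
      (fun a => by
        rw [div_le_iff₀ hqpos]
        exact hzB a)
    exact hcore.trans hεb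
  -- total mass is 1
  have hTot : ∑ z ∈ Supp, margZ p z = 1 := by
    rw [hSuppdef, Finset.sum_filter_ne_zero]
    rw [← hp1, Fintype.sum_prod_type]
    exact Finset.sum_comm
  calc 1 - (2 : ℝ) ^ (-t) ≤ ∑ z ∈ Supp, margZ p z - ∑ z ∈ Bad, margZ p z := by
        rw [hTot]; linarith
    _ = ∑ z ∈ Supp \ Bad, margZ p z := (Finset.sum_sdiff_eq_sub hBadSupp).symm
    _ ≤ ∑ z ∈ Good, margZ p z :=
        Finset.sum_le_sum_of_subset_of_nonneg hGoodz (fun z _ _ => hq0 z)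
end
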